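/- If T is a rearrangement on symmetrizable functions on ℝⁿ, then for every symmetrizable f and every t > essinf f, the set {x : Tf(x) ≥ t} coincides up to a null set with ∂_T({x : f(x) ≥ t}), where ∂_T A = {x : T(1_A)(x) = 1}. -/

import Mathlib

open MeasureTheory Set

/-- The essential infimum of a real-valued function, computed in `EReal`. -/
noncomputable def essInfE {n : ℕ} (f : EuclideanSpace ℝ (Fin n) → ℝ) : EReal :=
  essInf (fun x => (f x : EReal)) volume

/-- A function `f : ℝⁿ → ℝ` is symmetrizable if it is measurable and every
super-level set `{x | f x > t}` with `t > essinf f` has finite Lebesgue measure. -/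
def Symmetrizable {n : ℕ} (f : EuclideanSpace ℝ (Fin n) → ℝ) : Prop :=
  Measurable f ∧ ∀ t : ℝ, essInfE f < (t : EReal) → volume {x | t < f x} < ⊤

/-!
Put `A = {f ≥ t}` and, for a height `c > b`, let `P c` be the plateau function equal to `c` on `A`
and to `min f b` off `A`. Since `P t ≤ f` and both have `≥ t`-level set `A`, monotonicity gives
`{T (P t) ≥ t} ⊆ {T f ≥ t}` a.e., and equimeasurability makes the two measures equal and finite.
A plateau function takes no values in `(b, c)`, and equimeasurability transfers this gap to
`T (P c)`; so `{T (P c) ≥ c} = {T (P c) > b}` a.e., which lets one change the height of the plateau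
to `1`. With `b ≤ 0` we have `P 1 ≤ 1_A`, and the same comparison reaches `{T 1_A ≥ 1}`, which is
`{T 1_A = 1}` because `T 1_A ≤ 1` a.e.
-/

open Filter Topology
open scoped ENNReal

section LevelSets

lemma setOf_le_eq_iInter_setOf_lt {X : Type*} (w : X → ℝ) {u : ℕ → ℝ} {c : ℝ} (hu : ∀ k, u k < c)
    (hlim : Tendsto u atTop (𝓝 c)) : {x | c ≤ w x} = ⋂ k, {x | u k < w x} := by
  ext x
  simp only [mem_ofPred_eq, mem_iInter]
  refine ⟨fun h k => (hu k).trans_le h, fun h => ?_⟩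
  by_contra! hlt
  obtain ⟨k, hk⟩ := (hlim.eventually (lt_mem_nhds hlt)).exists
  exact (h k).not_gt hk

variable {X : Type*} [MeasurableSpace X] {μ : Measure X}

lemma measure_setOf_le_eq_of_forall_measure_setOf_lt_eq {v w : X → ℝ} (hv : Measurable v)
    (hw : Measurable w) (h : ∀ r, μ {x | r < v x} = μ {x | r < w x}) {s c : ℝ} (hsc : s < c)
    (hfin : μ {x | s < w x} ≠ ∞) : μ {x | c ≤ v x} = μ {x | c ≤ w x} := by
  obtain ⟨u, hu_mono, hu_mem, hu_lim⟩ := exists_seq_strictMono_tendsto' hsc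
  have h_iInf : ∀ g : X → ℝ, Measurable g → μ {x | s < g x} ≠ ∞ →
      μ {x | c ≤ g x} = ⨅ k, μ {x | u k < g x} := by
    intro g hg hg_fin
    rw [setOf_le_eq_iInter_setOf_lt g (fun k => (hu_mem k).2) hu_lim]
    refine Antitone.measure_iInter (fun i j hij x hx => (hu_mono.monotone hij).trans_lt hx)
      (fun k => (measurableSet_lt measurable_const hg).nullMeasurableSet) ⟨0, ?_⟩
    exact ne_top_of_le_ne_top hg_fin (measure_mono fun x hx => (hu_mem 0).1.trans hx)
  rw [h_iInf v hv (h s ▸ hfin), h_iInf w hw hfin]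
  simp_rw [h]

end LevelSets

section Symmetrizable

variable {n : ℕ}

lemma symmetrizable_const (c : ℝ) : Symmetrizable (fun _ : EuclideanSpace ℝ (Fin n) => c) := by
  refine ⟨measurable_const, fun r hr => ?_⟩
  have hcr : c < r := by
    have hc : (c : EReal) ≤ essInfE (fun _ : EuclideanSpace ℝ (Fin n) => c) :=
      le_essInf_of_ae_le _ (ae_of_all _ fun _ => le_rfl)
    exact_mod_cast hc.trans_lt hr
  simp [not_lt.mpr hcr.le]

lemma Symmetrizable.min_const {f : EuclideanSpace ℝ (Fin n) → ℝ} (hf : Symmetrizable f)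
    (b : ℝ) : Symmetrizable (fun x => min (f x) b) := by
  refine ⟨hf.1.min measurable_const, fun r hr => ?_⟩
  rcases le_or_gt b r with hbr | hrb
  · simp [fun x => not_lt.mpr ((min_le_right (f x) b).trans hbr)]
  · have hfr : essInfE f < r := by
      by_contra! hrf
      refine hr.not_ge (le_essInf_of_ae_le _ ?_)
      filter_upwards [ae_essInf_le (f := fun x => (f x : EReal))] with x hx
      exact_mod_cast le_min (EReal.coe_le_coe_iff.mp (hrf.trans hx)) hrb.le
    exact (measure_mono fun x (hx : r < min (f x) b) => hx.trans_le (min_le_left _ _)).trans_lt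
      (hf.2 r hfr)

lemma Symmetrizable.of_le {e φ : EuclideanSpace ℝ (Fin n) → ℝ} (he : Symmetrizable e)
    (hφ : Measurable φ) (hle : e ≤ φ) (hfin : volume {x | e x ≠ φ x} ≠ ∞) :
    Symmetrizable φ := by
  refine ⟨hφ, fun r hr => ?_⟩
  have her : essInfE e < r := (essInf_mono_ae (ae_of_all _ fun x => EReal.coe_le_coe_iff.mpr
    (hle x))).trans_lt hr
  have hsub : {x | r < φ x} ⊆ {x | r < e x} ∪ {x | e x ≠ φ x} := by
    intro x hx
    by_cases hx' : e x = φ x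
    · exact Or.inl (by simpa [hx'] using hx)
    · exact Or.inr hx'
  exact (measure_mono hsub).trans_lt ((measure_union_le _ _).trans_lt
    (ENNReal.add_lt_top.mpr ⟨he.2 r her, hfin.lt_top⟩))

variable {A : Set (EuclideanSpace ℝ (Fin n))} [DecidablePred (· ∈ A)]
  {e : EuclideanSpace ℝ (Fin n) → ℝ} {b c : ℝ}

lemma Symmetrizable.piecewise (he : Symmetrizable e) (heb : ∀ x, e x ≤ b) (hbc : b ≤ c)
    (hA : MeasurableSet A) (hAfin : volume A ≠ ∞) :
    Symmetrizable (A.piecewise (fun _ => c) e) := by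
  refine he.of_le (measurable_const.piecewise hA he.1)
    (le_piecewise (fun x _ => (heb x).trans hbc) fun _ _ => le_rfl)
    (ne_top_of_le_ne_top hAfin (measure_mono fun x hx => ?_))
  by_contra hxA
  exact hx (piecewise_eq_of_notMem _ _ _ hxA).symm

lemma setOf_lt_piecewise (heb : ∀ x, e x ≤ b) (hbc : b < c) :
    {x | b < A.piecewise (fun _ => c) e x} = A := by
  ext x
  by_cases hx : x ∈ A
  · simp [hx, hbc]
  · simp [hx, heb x]

lemma setOf_le_piecewise {c' : ℝ} (heb : ∀ x, e x ≤ b) (hbc' : b < c') (hc'c : c' ≤ c) :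
    {x | c' ≤ A.piecewise (fun _ => c) e x} = A := by
  ext x
  by_cases hx : x ∈ A
  · simp [hx, hc'c]
  · simp [hx, (heb x).trans_lt hbc']

end Symmetrizable

structure IsRearrangement {n : ℕ}
    (T : (EuclideanSpace ℝ (Fin n) → ℝ) → (EuclideanSpace ℝ (Fin n) → ℝ)) : Prop where
  symmetrizable : ∀ f, Symmetrizable f → Symmetrizable (T f)
  measure_setOf_lt : ∀ f, Symmetrizable f → ∀ t : ℝ,
    volume {x | t < T f x} = volume {x | t < f x}
  ae_mono : ∀ f g, Symmetrizable f → Symmetrizable g → f ≤ᵐ[volume] g → T f ≤ᵐ[volume] T g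

namespace IsRearrangement

variable {n : ℕ} {T : (EuclideanSpace ℝ (Fin n) → ℝ) → (EuclideanSpace ℝ (Fin n) → ℝ)}
  (hT : IsRearrangement T) {φ ψ : EuclideanSpace ℝ (Fin n) → ℝ} {b c s : ℝ}
include hT

lemma measure_setOf_le (hφ : Symmetrizable φ) (hsc : s < c)
    (hfin : volume {x | s < φ x} ≠ ∞) : volume {x | c ≤ T φ x} = volume {x | c ≤ φ x} :=
  measure_setOf_le_eq_of_forall_measure_setOf_lt_eq (hT.symmetrizable φ hφ).1 hφ.1
    (hT.measure_setOf_lt φ hφ) hsc hfin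

lemma setOf_le_ae_eq_of_ae_le (hφ : Symmetrizable φ) (hψ : Symmetrizable ψ)
    (hle : φ ≤ᵐ[volume] ψ) (hsc : s < c) (hfin : volume {x | s < ψ x} ≠ ∞)
    (heq : volume {x | c ≤ φ x} = volume {x | c ≤ ψ x}) :
    {x | c ≤ T φ x} =ᵐ[volume] {x | c ≤ T ψ x} := by
  have hfinφ : volume {x | s < φ x} ≠ ∞ :=
    ne_top_of_le_ne_top hfin (measure_mono_ae (hle.mono fun x hx h => h.trans_le hx))
  refine ae_eq_of_ae_subset_of_measure_ge ?_ ?_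
    (measurableSet_le measurable_const (hT.symmetrizable φ hφ).1).nullMeasurableSet ?_
  · filter_upwards [hT.ae_mono φ ψ hφ hψ hle] with x hx h using h.trans hx
  · rw [hT.measure_setOf_le hφ hsc hfinφ, hT.measure_setOf_le hψ hsc hfin, heq]
  · rw [hT.measure_setOf_le hψ hsc hfin]
    exact ne_top_of_le_ne_top hfin (measure_mono fun x hx => hsc.trans_le hx)

lemma setOf_le_ae_eq_setOf_lt_of_gap (hφ : Symmetrizable φ)
    (hgap : {x | c ≤ φ x} = {x | b < φ x}) (hbc : b < c) (hfin : volume {x | b < φ x} ≠ ∞) :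
    {x | c ≤ T φ x} =ᵐ[volume] {x | b < T φ x} := by
  refine ae_eq_of_subset_of_measure_ge (fun x hx => hbc.trans_le hx) ?_
    (measurableSet_le measurable_const (hT.symmetrizable φ hφ).1).nullMeasurableSet ?_
  · rw [hT.measure_setOf_lt φ hφ, ← hgap, hT.measure_setOf_le hφ hbc hfin]
  · rwa [hT.measure_setOf_lt φ hφ]

lemma setOf_le_ae_eq_setOf_eq_of_le (hφ : Symmetrizable φ) (hφc : ∀ x, φ x ≤ c) :
    {x | c ≤ T φ x} =ᵐ[volume] {x | T φ x = c} := by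
  have hnull : volume {x | c < T φ x} = 0 := by
    simp [hT.measure_setOf_lt φ hφ, fun x => not_lt.mpr (hφc x)]
  have hle : ∀ᵐ x, T φ x ≤ c := by simpa [ae_iff] using hnull
  filter_upwards [hle] with x hx
  exact propext ⟨hx.antisymm, fun h => h.ge⟩

variable {A : Set (EuclideanSpace ℝ (Fin n))} [DecidablePred (· ∈ A)]
  {e : EuclideanSpace ℝ (Fin n) → ℝ}

lemma setOf_le_piecewise_ae_eq (he : Symmetrizable e) (heb : ∀ x, e x ≤ b)
    (hA : MeasurableSet A) (hAfin : volume A ≠ ∞) {c' : ℝ} (hbc : b < c) (hbc' : b < c') :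
    {x | c ≤ T (A.piecewise (fun _ => c) e) x} =ᵐ[volume]
      {x | c' ≤ T (A.piecewise (fun _ => c') e) x} := by
  have hsymm : ∀ c, b < c → Symmetrizable (A.piecewise (fun _ => c) e) :=
    fun c hbc => he.piecewise heb hbc.le hA hAfin
  have hgap : ∀ {c₁ c₂}, b < c₁ → c₁ ≤ c₂ → {x | c₁ ≤ T (A.piecewise (fun _ => c₂) e) x}
      =ᵐ[volume] {x | b < T (A.piecewise (fun _ => c₂) e) x} := fun h₁ h₁₂ =>
    hT.setOf_le_ae_eq_setOf_lt_of_gap (hsymm _ (h₁.trans_le h₁₂))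
      ((setOf_le_piecewise heb h₁ h₁₂).trans (setOf_lt_piecewise heb (h₁.trans_le h₁₂)).symm) h₁
      (by rwa [setOf_lt_piecewise heb (h₁.trans_le h₁₂)])
  have hheight : ∀ {c₁ c₂}, b < c₁ → c₁ ≤ c₂ → {x | c₁ ≤ T (A.piecewise (fun _ => c₁) e) x}
      =ᵐ[volume] {x | c₂ ≤ T (A.piecewise (fun _ => c₂) e) x} := fun h₁ h₁₂ => by
    have h₂ := h₁.trans_le h₁₂
    refine (hT.setOf_le_ae_eq_of_ae_le (hsymm _ h₁) (hsymm _ h₂)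
      (ae_of_all _ (piecewise_mono (fun _ _ => h₁₂) fun _ _ => le_rfl)) h₁ ?_ ?_).trans
      ((hgap h₁ h₁₂).trans (hgap h₂ le_rfl).symm)
    · rwa [setOf_lt_piecewise heb h₂]
    · rw [setOf_le_piecewise heb h₁ le_rfl, setOf_le_piecewise heb h₁ h₁₂]
  have hmin : b < min c c' := lt_min hbc hbc'
  exact (hheight hmin (min_le_left c c')).symm.trans (hheight hmin (min_le_right c c'))

end IsRearrangement

theorem stmt_5 {n : ℕ}
    (T : (EuclideanSpace ℝ (Fin n) → ℝ) → (EuclideanSpace ℝ (Fin n) → ℝ))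
    (hmap : ∀ f, Symmetrizable f → Symmetrizable (T f))
    (hequi : ∀ f, Symmetrizable f → ∀ t : ℝ,
      volume {x | t < T f x} = volume {x | t < f x})
    (hmono : ∀ f g, Symmetrizable f → Symmetrizable g →
      f ≤ᵐ[volume] g → T f ≤ᵐ[volume] T g)
    (f : EuclideanSpace ℝ (Fin n) → ℝ) (hf : Symmetrizable f)
    (t : ℝ) (ht : essInfE f < (t : EReal)) :
    {x | t ≤ T f x} =ᵐ[volume]
      {x | T (Set.indicator {y | t ≤ f y} 1) x = 1} := by
  classical
  have hT : IsRearrangement T := ⟨hmap, hequi, hmono⟩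
  obtain ⟨s, hfs, hst⟩ := EReal.exists_between_coe_real ht
  have hst : s < t := mod_cast hst
  set A := {y | t ≤ f y}
  have hA : MeasurableSet A := measurableSet_le measurable_const hf.1
  have hsfin : volume {x | s < f x} ≠ ∞ := (hf.2 s hfs).ne
  have hAfin : volume A ≠ ∞ :=
    ne_top_of_le_ne_top hsfin (measure_mono fun x hx => hst.trans_le hx)
  set b := min s 0
  set e := fun x => min (f x) b
  have he : Symmetrizable e := hf.min_const b
  have heb : ∀ x, e x ≤ b := fun x => min_le_right _ _
  have hbt : b < t := (min_le_left _ _).trans_lt hst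
  have hb1 : b < 1 := (min_le_right _ _).trans_lt one_pos
  have hu : Symmetrizable (A.piecewise (fun _ => (1 : ℝ)) fun _ => 0) :=
    (symmetrizable_const 0).piecewise (fun _ => le_rfl) zero_le_one hA hAfin
  rw [← piecewise_eq_indicator]
  have hf_plateau : {x | t ≤ T f x} =ᵐ[volume] {x | t ≤ T (A.piecewise (fun _ => t) e) x} :=
    (hT.setOf_le_ae_eq_of_ae_le (he.piecewise heb hbt.le hA hAfin) hf
      (ae_of_all _ (piecewise_le (fun _ hx => hx) fun _ _ => min_le_left _ _)) hst hsfin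
      (by rw [setOf_le_piecewise heb hbt le_rfl])).symm
  have hplateau_u : {x | 1 ≤ T (A.piecewise (fun _ => 1) e) x} =ᵐ[volume]
      {x | 1 ≤ T (A.piecewise (fun _ => 1) fun _ => 0) x} :=
    hT.setOf_le_ae_eq_of_ae_le (he.piecewise heb hb1.le hA hAfin) hu
      (ae_of_all _ (piecewise_mono (fun _ _ => le_rfl) fun _ _ => (heb _).trans (min_le_right _ _)))
      zero_lt_one (by rwa [setOf_lt_piecewise (fun _ => le_rfl) zero_lt_one])
      (by rw [setOf_le_piecewise heb hb1 le_rfl,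
        setOf_le_piecewise (fun _ => le_rfl) zero_lt_one le_rfl])
  exact hf_plateau.trans <| (hT.setOf_le_piecewise_ae_eq he heb hA hAfin hbt hb1).trans <|
    hplateau_u.trans <|
      hT.setOf_le_ae_eq_setOf_eq_of_le hu fun x => by by_cases hx : x ∈ A <;> simp [hx]
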